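/- arXiv:2507.03519 — 6 statements merged into one kernel-verified Lean document; each statement's English description precedes it below -/
import Mathlib

section
/- Over a field of characteristic 2, every 5×5 matrix M in GL₅ (acting projectively) that fixes the quadratic form X² + YZ in variables (X,Y,Z,T,U) has the block form with first row (ad−bc, ac, bd, 0, 0), second row (0, a², b², 0, 0), third row (0, c², d², 0, 0), arbitrary entries in rows 4 and 5 in the first three columns, and an invertible 2×2 block in the last two columns of rows 4 and 5, for some a,b,c,d with ad−bc ≠ 0. -/
/-!
In characteristic 2 the form `q = X² + YZ` has the alternating polar form
`b(x, y) = x₁y₂ + x₂y₁`, which only sees the `Y,Z`-coordinates. If `q ∘ M = λ q` then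
`b(Mx, My) = λ b(x, y)`; as `b(Me₁, Me₂) = λ ≠ 0`, the `Y,Z`-parts of the columns `Me₁, Me₂` span
the plane, so every other column, being `b`-orthogonal to both, has vanishing `Y,Z`-part.
Then `q(Meⱼ) = λ q(eⱼ)` kills the `X`-entries of the last two columns and makes the entries of the
upper `3×3` block satisfy `u² = ps + qr`, `v² = pr`, `w² = qs`, which Frobenius square roots
`a, b, c, d` of `p, q, r, s` solve. Finally `M` is block lower triangular, so the determinant of its
lower right `2×2` block is a factor of `det M`.
-/

open MvPolynomial
open scoped Matrix

theorem MvPolynomial.eval_aeval_linear {R ι : Type*} [CommRing R] [Fintype ι]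
    (M : Matrix ι ι R) (p : MvPolynomial ι R) (v : ι → R) :
    eval v (aeval (fun i => ∑ j, C (M i j) * X j) p) = eval (M *ᵥ v) p := by
  induction p using MvPolynomial.induction_on <;>
    simp_all [Matrix.mulVec, dotProduct]

theorem Matrix.det_eq_det_mul_det_of_castAdd_natAdd_eq_zero {R : Type*} [CommRing R] {m n : ℕ}
    (M : Matrix (Fin (m + n)) (Fin (m + n)) R)
    (h : ∀ i j, M (Fin.castAdd n i) (Fin.natAdd m j) = 0) :
    M.det = (M.submatrix (Fin.castAdd n) (Fin.castAdd n)).det *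
      (M.submatrix (Fin.natAdd m) (Fin.natAdd m)).det := by
  have hblocks : M.submatrix finSumFinEquiv finSumFinEquiv = Matrix.fromBlocks
      (M.submatrix (Fin.castAdd n) (Fin.castAdd n)) 0
      (M.submatrix (Fin.natAdd m) (Fin.castAdd n)) (M.submatrix (Fin.natAdd m) (Fin.natAdd m)) := by
    ext (i | i) (j | j) <;> simp [h]
  rw [← Matrix.det_submatrix_equiv_self finSumFinEquiv, hblocks, Matrix.det_fromBlocks_zero₁₂]

theorem exists_sq_parametrization {R : Type*} [CommRing R] [CharP R 2] [PerfectRing R 2]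
    {u v w p q r s : R} (hu : u ^ 2 = p * s + q * r) (hv : v ^ 2 = p * r) (hw : w ^ 2 = q * s) :
    ∃ a b c d : R, u = a * d - b * c ∧ v = a * c ∧ w = b * d ∧
      p = a ^ 2 ∧ q = b ^ 2 ∧ r = c ^ 2 ∧ s = d ^ 2 := by
  simp only [← frobenius_def] at *
  obtain ⟨a, rfl⟩ := surjective_frobenius R 2 p
  obtain ⟨b, rfl⟩ := surjective_frobenius R 2 q
  obtain ⟨c, rfl⟩ := surjective_frobenius R 2 r
  obtain ⟨d, rfl⟩ := surjective_frobenius R 2 s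
  refine ⟨a, b, c, d, injective_frobenius R 2 ?_, injective_frobenius R 2 ?_,
    injective_frobenius R 2 ?_, rfl, rfl, rfl, rfl⟩ <;> simp [hu, hv, hw, CharTwo.sub_eq_add]

section SqAddMul

variable {R : Type*} [CommRing R]

def sqAddMul (v : Fin 5 → R) : R := v 0 ^ 2 + v 1 * v 2

def polarSqAddMul (x y : Fin 5 → R) : R := x 1 * y 2 + x 2 * y 1

def PreservesSqAddMul (M : Matrix (Fin 5) (Fin 5) R) (lam : R) : Prop :=
  ∀ v, sqAddMul (M *ᵥ v) = lam * sqAddMul v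

theorem PreservesSqAddMul.sqAddMul_col {M : Matrix (Fin 5) (Fin 5) R} {lam : R}
    (hQ : PreservesSqAddMul M lam) (j : Fin 5) :
    sqAddMul (M.col j) = lam * sqAddMul (Pi.single j 1) := by
  rw [← Matrix.mulVec_single_one, hQ]

variable [CharP R 2]

theorem sqAddMul_add (x y : Fin 5 → R) :
    sqAddMul (x + y) = sqAddMul x + sqAddMul y + polarSqAddMul x y := by
  simp only [sqAddMul, polarSqAddMul, Pi.add_apply]
  linear_combination (x 0 * y 0) * CharTwo.two_eq_zero (R := R)

namespace PreservesSqAddMul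

variable {M : Matrix (Fin 5) (Fin 5) R} {lam : R}

theorem polar_mulVec (hQ : PreservesSqAddMul M lam) (x y : Fin 5 → R) :
    polarSqAddMul (M *ᵥ x) (M *ᵥ y) = lam * polarSqAddMul x y := by
  have h := hQ (x + y)
  rw [Matrix.mulVec_add, sqAddMul_add, sqAddMul_add, hQ, hQ] at h
  linear_combination h

theorem polar_col (hQ : PreservesSqAddMul M lam) (j l : Fin 5) :
    polarSqAddMul (M.col j) (M.col l) = lam * polarSqAddMul (Pi.single j 1) (Pi.single l 1) := by
  rw [← Matrix.mulVec_single_one, ← Matrix.mulVec_single_one, hQ.polar_mulVec]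

end PreservesSqAddMul

variable [NoZeroDivisors R]

theorem eq_zero_of_polarSqAddMul_eq_zero {x y z : Fin 5 → R} (hxy : polarSqAddMul x y ≠ 0)
    (hx : polarSqAddMul z x = 0) (hy : polarSqAddMul z y = 0) : z 1 = 0 ∧ z 2 = 0 := by
  unfold polarSqAddMul at *
  have two : (2 : R) = 0 := CharTwo.two_eq_zero
  constructor <;> refine (mul_eq_zero.mp ?_).resolve_left hxy
  · linear_combination x 1 * hy + y 1 * hx - (x 1 * y 1 * z 2) * two
  · linear_combination x 2 * hy + y 2 * hx - (x 2 * y 2 * z 1) * two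

namespace PreservesSqAddMul

variable {M : Matrix (Fin 5) (Fin 5) R} {lam : R}

theorem rows_one_two_eq_zero (hQ : PreservesSqAddMul M lam) (hlam : lam ≠ 0) {j : Fin 5}
    (hj1 : j ≠ 1) (hj2 : j ≠ 2) : M 1 j = 0 ∧ M 2 j = 0 := by
  refine eq_zero_of_polarSqAddMul_eq_zero (x := M.col 1) (y := M.col 2) (z := M.col j) ?_ ?_ ?_
  all_goals
    rw [hQ.polar_col]
    simp [polarSqAddMul, hj1, hj2, hlam]

theorem row_zero_eq_zero (hQ : PreservesSqAddMul M lam) (hlam : lam ≠ 0) {j : Fin 5}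
    (hj0 : j ≠ 0) (hj1 : j ≠ 1) (hj2 : j ≠ 2) : M 0 j = 0 := by
  have h := hQ.sqAddMul_col j
  simpa [sqAddMul, hj0, hj1, hj2, (hQ.rows_one_two_eq_zero hlam hj1 hj2).1] using h

end PreservesSqAddMul

end SqAddMul

/-- Over an algebraically closed field of characteristic 2, every invertible `5×5` matrix
that fixes the quadratic form `X² + YZ` (in variables `X,Y,Z,T,U`, indexed `0,…,4`)
up to a nonzero scalar has the prescribed block form, with first three rows
`(ad−bc, ac, bd, 0, 0)`, `(0, a², b², 0, 0)`, `(0, c², d², 0, 0)` for some `a,b,c,d`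
with `ad − bc ≠ 0`, arbitrary entries in the first three columns of rows 4 and 5,
and an invertible `2×2` block in the last two columns of rows 4 and 5. -/
theorem stmt_1 (k : Type) [Field k] [IsAlgClosed k] [CharP k 2]
    (M : Matrix (Fin 5) (Fin 5) k) (hM : IsUnit M.det) (lam : k) (hlam : lam ≠ 0)
    (hfix : MvPolynomial.aeval (fun i : Fin 5 => ∑ j : Fin 5, MvPolynomial.C (M i j) * X j)
        (X 0 ^ 2 + X 1 * X 2 : MvPolynomial (Fin 5) k)
      = C lam * (X 0 ^ 2 + X 1 * X 2)) :
    ∃ a b c d : k, a * d - b * c ≠ 0 ∧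
      M 0 0 = a * d - b * c ∧ M 0 1 = a * c ∧ M 0 2 = b * d ∧ M 0 3 = 0 ∧ M 0 4 = 0 ∧
      M 1 0 = 0 ∧ M 1 1 = a ^ 2 ∧ M 1 2 = b ^ 2 ∧ M 1 3 = 0 ∧ M 1 4 = 0 ∧
      M 2 0 = 0 ∧ M 2 1 = c ^ 2 ∧ M 2 2 = d ^ 2 ∧ M 2 3 = 0 ∧ M 2 4 = 0 ∧
      M 3 3 * M 4 4 - M 3 4 * M 4 3 ≠ 0 := by
  have hQ : PreservesSqAddMul M lam := fun v => by
    have h := congrArg (eval v) hfix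
    rw [MvPolynomial.eval_aeval_linear] at h
    simpa [sqAddMul] using h
  obtain ⟨hM10, hM20⟩ := hQ.rows_one_two_eq_zero hlam (j := 0) (by decide) (by decide)
  obtain ⟨hM13, hM23⟩ := hQ.rows_one_two_eq_zero hlam (j := 3) (by decide) (by decide)
  obtain ⟨hM14, hM24⟩ := hQ.rows_one_two_eq_zero hlam (j := 4) (by decide) (by decide)
  have hM03 := hQ.row_zero_eq_zero hlam (j := 3) (by decide) (by decide) (by decide)
  have hM04 := hQ.row_zero_eq_zero hlam (j := 4) (by decide) (by decide) (by decide)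
  have h0 : M 0 0 ^ 2 = lam := by simpa [sqAddMul, hM10] using hQ.sqAddMul_col 0
  have h1 : M 0 1 ^ 2 = M 1 1 * M 2 1 := by
    simpa [sqAddMul, CharTwo.add_eq_zero] using hQ.sqAddMul_col 1
  have h2 : M 0 2 ^ 2 = M 1 2 * M 2 2 := by
    simpa [sqAddMul, CharTwo.add_eq_zero] using hQ.sqAddMul_col 2
  have hpolar : M 1 1 * M 2 2 + M 2 1 * M 1 2 = lam := by
    simpa [polarSqAddMul] using hQ.polar_col 1 2
  obtain ⟨a, b, c, d, h00, h01, h02, h11, h12, h21, h22⟩ :=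
    exists_sq_parametrization (by rw [h0, ← hpolar]; ring) h1 h2
  have hdet : a * d - b * c ≠ 0 := by
    rintro h
    apply hlam
    rw [← h0, h00, h, zero_pow two_ne_zero]
  have hD : M 3 3 * M 4 4 - M 3 4 * M 4 3 ≠ 0 := by
    have h := hM.ne_zero
    rw [Matrix.det_eq_det_mul_det_of_castAdd_natAdd_eq_zero (m := 3) (n := 2) M (by
      intro i j; fin_cases i <;> fin_cases j <;> assumption)] at h
    simpa [Matrix.det_fin_two] using right_ne_zero_of_mul h
  exact ⟨a, b, c, d, hdet, h00, h01, h02, hM03, hM04, hM10, h11, h12, hM13, hM14, hM20, h21,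
    h22, hM23, hM24, hD⟩
end

section
/- Let k be an algebraically closed field of characteristic 2 and let C be the projective curve in ℙ⁴ cut out by q₁ = X² + YZ, q₂ = XY + ZT + T², and q₃ = b₂XZ + b₃XT + b₃²YT + b₈ZT + ZU + U², with b₂, b₈ ∈ k and b₃ ∈ k nonzero. Then the map ι defined by U ↦ U + Z (fixing X, Y, Z, T) maps the ideal (q₁, q₂, q₃) to itself, hence induces an automorphism of C of order 2. -/
open MvPolynomial

/-! In characteristic 2 the substitution `U ↦ U + Z` fixes each `qᵢ`: `q₁` and `q₂` do not
involve `U`, and `q₃` involves `U` only through `ZU + U²`, which is invariant because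
`Z(U + Z) + (U + Z)² = ZU + U² + 2Z²`. Applying the substitution twice sends `U` to `U + 2Z = U`. -/

namespace MvPolynomial

variable {R σ : Type*} [CommRing R] [DecidableEq σ]

noncomputable def translateVar (i j : σ) : MvPolynomial σ R →ₐ[R] MvPolynomial σ R :=
  aeval (Function.update X i (X i + X j))

variable {i j : σ}

@[simp]
theorem translateVar_X_self : translateVar i j (X i : MvPolynomial σ R) = X i + X j := by
  simp [translateVar]

@[simp]
theorem translateVar_X_of_ne {l : σ} (h : l ≠ i) :
    translateVar i j (X l : MvPolynomial σ R) = X l := by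
  simp [translateVar, Function.update_of_ne h]

variable [CharP R 2]

theorem translateVar_mul_add_sq (hij : i ≠ j) :
    translateVar i j (X j * X i + X i ^ 2 : MvPolynomial σ R) = X j * X i + X i ^ 2 := by
  simp only [map_add, map_mul, map_pow, translateVar_X_self, translateVar_X_of_ne hij.symm,
    CharTwo.add_sq]
  linear_combination (X j ^ 2 : MvPolynomial σ R) * CharTwo.two_eq_zero (R := MvPolynomial σ R)

theorem translateVar_comp_self (hij : i ≠ j) :
    (translateVar i j).comp (translateVar i j) = AlgHom.id R (MvPolynomial σ R) := by
  refine algHom_ext fun l => ?_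
  by_cases hl : l = i
  · subst hl
    simp only [AlgHom.coe_comp, Function.comp_apply, translateVar_X_self, map_add,
      translateVar_X_of_ne hij.symm, AlgHom.id_apply]
    linear_combination (X j : MvPolynomial σ R) * CharTwo.two_eq_zero (R := MvPolynomial σ R)
  · simp [translateVar_X_of_ne hl]

end MvPolynomial

theorem stmt_3_general (k : Type) [Field k] [CharP k 2]
    (b₂ b₃ b₈ : k)
    (q₁ q₂ q₃ : MvPolynomial (Fin 5) k)
    (hq₁ : q₁ = X 0 ^ 2 + X 1 * X 2)
    (hq₂ : q₂ = X 0 * X 1 + X 2 * X 3 + X 3 ^ 2)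
    (hq₃ : q₃ = C b₂ * X 0 * X 2 + C b₃ * X 0 * X 3 + C (b₃ ^ 2) * X 1 * X 3
        + C b₈ * X 2 * X 3 + X 2 * X 4 + X 4 ^ 2)
    (ι : MvPolynomial (Fin 5) k →ₐ[k] MvPolynomial (Fin 5) k)
    (hι : ι = MvPolynomial.aeval (fun i : Fin 5 => if i = 4 then X 4 + X 2 else X i)) :
    ι q₁ ∈ Ideal.span {q₁, q₂, q₃} ∧ ι q₂ ∈ Ideal.span {q₁, q₂, q₃} ∧
      ι q₃ ∈ Ideal.span {q₁, q₂, q₃} ∧ ι.comp ι = AlgHom.id k _ := by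
  obtain rfl : ι = translateVar 4 2 := by
    rw [hι, translateVar]
    congr 1
    funext l
    rw [Function.update_apply]
  have fix₁ : translateVar 4 2 q₁ = q₁ := by simp [hq₁]
  have fix₂ : translateVar 4 2 q₂ = q₂ := by simp [hq₂]
  have fix₃ : translateVar 4 2 q₃ = q₃ := by
    rw [hq₃, add_assoc, map_add, translateVar_mul_add_sq (by decide)]
    simp
  refine ⟨?_, ?_, ?_, translateVar_comp_self (by decide)⟩
  · rw [fix₁]
    exact Ideal.subset_span (by simp)
  · rw [fix₂]
    exact Ideal.subset_span (by simp)
  · rw [fix₃]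
    exact Ideal.subset_span (by simp)

/-- In `k[X,Y,Z,T,U]` (variables indexed `0,…,4`) over an algebraically closed field `k`
of characteristic 2, with `q₁ = X² + YZ`, `q₂ = XY + ZT + T²`,
`q₃ = b₂XZ + b₃XT + b₃²YT + b₈ZT + ZU + U²` (`b₃ ≠ 0`), the substitution
`ι : U ↦ U + Z` (fixing `X,Y,Z,T`) maps the ideal `(q₁,q₂,q₃)` to itself, and `ι∘ι = id`,
so `ι` induces an automorphism of the curve `C = V(q₁,q₂,q₃)` of order 2. -/
theorem stmt_3 (k : Type) [Field k] [IsAlgClosed k] [CharP k 2]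
    (b₂ b₃ b₈ : k) (hb₃ : b₃ ≠ 0)
    (q₁ q₂ q₃ : MvPolynomial (Fin 5) k)
    (hq₁ : q₁ = X 0 ^ 2 + X 1 * X 2)
    (hq₂ : q₂ = X 0 * X 1 + X 2 * X 3 + X 3 ^ 2)
    (hq₃ : q₃ = C b₂ * X 0 * X 2 + C b₃ * X 0 * X 3 + C (b₃ ^ 2) * X 1 * X 3
        + C b₈ * X 2 * X 3 + X 2 * X 4 + X 4 ^ 2)
    (ι : MvPolynomial (Fin 5) k →ₐ[k] MvPolynomial (Fin 5) k)
    (hι : ι = MvPolynomial.aeval (fun i : Fin 5 => if i = 4 then X 4 + X 2 else X i)) :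
    ι q₁ ∈ Ideal.span {q₁, q₂, q₃} ∧ ι q₂ ∈ Ideal.span {q₁, q₂, q₃} ∧
      ι q₃ ∈ Ideal.span {q₁, q₂, q₃} ∧ ι.comp ι = AlgHom.id k _ :=
  stmt_3_general k b₂ b₃ b₈ q₁ q₂ q₃ hq₁ hq₂ hq₃ ι hι
end

section
/- Let k be an algebraically closed field of characteristic 2 and let q₁ = X² + YZ, q₂ = XY + ZT + T², q₃ = b₂XZ + b₃XT + b₃²YT + b₈ZT + ZU + U² in k[X,Y,Z,T,U], with b₃ ≠ 0, and let g₂ ∈ k satisfy g₂² + g₂ = b₈. Then the substitution η defined by T ↦ T + Z and U ↦ U + b₃X + g₂Z (fixing X, Y, Z) maps the ideal (q₁, q₂, q₃) to itself, and η∘η is the identity substitution. -/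
/-!
In characteristic 2 the substitution `η` adds to `T` and `U` linear forms in the fixed variables
`X, Z`, so applying it twice adds them twice, i.e. not at all. It fixes `q₁` outright and `q₂`
because `ZT + T² = T (T + Z)` and `η` swaps the factors `T` and `T + Z`. Expanding `η q₃` with
`g₂² + g₂ = b₈` gives `q₃ + b₃² q₁`.
-/

open MvPolynomial

namespace CharTwoQuadrics

variable {R : Type*} [CommRing R]

/-- The variables `X, Y, Z, T, U` are `X 0, …, X 4`. -/
noncomputable def eta (b₃ g₂ : R) : MvPolynomial (Fin 5) R →ₐ[R] MvPolynomial (Fin 5) R :=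
  aeval fun i : Fin 5 =>
    if i = 3 then X 3 + X 2
    else if i = 4 then X 4 + C b₃ * X 0 + C g₂ * X 2
    else X i

section eta

variable (b₃ g₂ : R)

@[simp] lemma eta_X_zero : eta b₃ g₂ (X 0) = X 0 := by simp [eta]
@[simp] lemma eta_X_one : eta b₃ g₂ (X 1) = X 1 := by simp [eta]
@[simp] lemma eta_X_two : eta b₃ g₂ (X 2) = X 2 := by simp [eta]
@[simp] lemma eta_X_three : eta b₃ g₂ (X 3) = X 3 + X 2 := by simp [eta]
@[simp] lemma eta_X_four : eta b₃ g₂ (X 4) = X 4 + C b₃ * X 0 + C g₂ * X 2 := by simp [eta]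

variable [CharP R 2]

theorem eta_comp_eta : (eta b₃ g₂).comp (eta b₃ g₂) = AlgHom.id R _ := by
  have two : (2 : MvPolynomial (Fin 5) R) = 0 := CharTwo.two_eq_zero
  refine algHom_ext fun i => ?_
  fin_cases i <;> simp only [Fin.zero_eta, Fin.mk_one, Fin.reduceFinMk, AlgHom.comp_apply,
    AlgHom.id_apply, map_add, map_mul, algHom_C, algebraMap_eq, eta_X_zero, eta_X_one, eta_X_two,
    eta_X_three, eta_X_four]
  · linear_combination X 2 * two
  · linear_combination (C b₃ * X 0 + C g₂ * X 2) * two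

end eta

noncomputable def q₁ : MvPolynomial (Fin 5) R := X 0 ^ 2 + X 1 * X 2

noncomputable def q₂ : MvPolynomial (Fin 5) R := X 0 * X 1 + X 2 * X 3 + X 3 ^ 2

noncomputable def q₃ (b₂ b₃ b₈ : R) : MvPolynomial (Fin 5) R :=
  C b₂ * X 0 * X 2 + C b₃ * X 0 * X 3 + C (b₃ ^ 2) * X 1 * X 3
    + C b₈ * X 2 * X 3 + X 2 * X 4 + X 4 ^ 2

theorem eta_q₁ (b₃ g₂ : R) : eta b₃ g₂ q₁ = q₁ := by
  simp [q₁]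

theorem eta_q₂ [CharP R 2] (b₃ g₂ : R) : eta b₃ g₂ q₂ = q₂ := by
  have two : (2 : MvPolynomial (Fin 5) R) = 0 := CharTwo.two_eq_zero
  simp only [q₂, map_add, map_mul, map_pow, eta_X_zero, eta_X_one, eta_X_two, eta_X_three]
  linear_combination (X 2 * X 3 + X 2 ^ 2) * two

theorem eta_q₃ [CharP R 2] (b₂ b₃ b₈ g₂ : R) (hg₂ : g₂ ^ 2 + g₂ = b₈) :
    eta b₃ g₂ (q₃ b₂ b₃ b₈) = q₃ b₂ b₃ b₈ + C (b₃ ^ 2) * q₁ := by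
  have two : (2 : MvPolynomial (Fin 5) R) = 0 := CharTwo.two_eq_zero
  subst hg₂
  simp only [q₃, q₁, map_add, map_mul, map_pow, algHom_C, algebraMap_eq, eta_X_zero,
    eta_X_one, eta_X_two, eta_X_three, eta_X_four]
  linear_combination (X 0 * X 2 * C b₃ + X 0 * X 2 * C b₃ * C g₂ + X 0 * C b₃ * X 4
    + X 2 * C g₂ * X 4 + X 2 ^ 2 * C g₂ + X 2 ^ 2 * C g₂ ^ 2) * two

end CharTwoQuadrics

open CharTwoQuadrics in
theorem stmt_4_general (k : Type) [Field k] [CharP k 2]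
    (b₂ b₃ b₈ g₂ : k) (hg₂ : g₂ ^ 2 + g₂ = b₈)
    (q₁ q₂ q₃ : MvPolynomial (Fin 5) k)
    (hq₁ : q₁ = X 0 ^ 2 + X 1 * X 2)
    (hq₂ : q₂ = X 0 * X 1 + X 2 * X 3 + X 3 ^ 2)
    (hq₃ : q₃ = C b₂ * X 0 * X 2 + C b₃ * X 0 * X 3 + C (b₃ ^ 2) * X 1 * X 3
        + C b₈ * X 2 * X 3 + X 2 * X 4 + X 4 ^ 2)
    (η : MvPolynomial (Fin 5) k →ₐ[k] MvPolynomial (Fin 5) k)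
    (hη : η = MvPolynomial.aeval (fun i : Fin 5 =>
        if i = 3 then X 3 + X 2
        else if i = 4 then X 4 + C b₃ * X 0 + C g₂ * X 2
        else X i)) :
    η q₁ ∈ Ideal.span {q₁, q₂, q₃} ∧ η q₂ ∈ Ideal.span {q₁, q₂, q₃} ∧
      η q₃ ∈ Ideal.span {q₁, q₂, q₃} ∧ η.comp η = AlgHom.id k _ := by
  obtain rfl : η = eta b₃ g₂ := hη
  obtain rfl : q₁ = CharTwoQuadrics.q₁ := hq₁
  obtain rfl : q₂ = CharTwoQuadrics.q₂ := hq₂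
  obtain rfl : q₃ = CharTwoQuadrics.q₃ b₂ b₃ b₈ := hq₃
  have mem₁ : q₁ ∈ Ideal.span {q₁, q₂, q₃ b₂ b₃ b₈} := Ideal.subset_span (by simp)
  refine ⟨?_, ?_, ?_, eta_comp_eta b₃ g₂⟩
  · rw [eta_q₁]; exact mem₁
  · rw [eta_q₂]; exact Ideal.subset_span (by simp)
  · rw [eta_q₃ b₂ b₃ b₈ g₂ hg₂]
    exact Ideal.add_mem _ (Ideal.subset_span (by simp)) (Ideal.mul_mem_left _ _ mem₁)

/-- In `k[X,Y,Z,T,U]` over an algebraically closed field `k` of characteristic 2, with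
`q₁ = X² + YZ`, `q₂ = XY + ZT + T²`, `q₃ = b₂XZ + b₃XT + b₃²YT + b₈ZT + ZU + U²`
(`b₃ ≠ 0`) and `g₂² + g₂ = b₈`, the substitution `η : T ↦ T + Z`, `U ↦ U + b₃X + g₂Z`
(fixing `X,Y,Z`) maps the ideal `(q₁,q₂,q₃)` to itself, and `η∘η` is the identity. -/
theorem stmt_4 (k : Type) [Field k] [IsAlgClosed k] [CharP k 2]
    (b₂ b₃ b₈ g₂ : k) (hb₃ : b₃ ≠ 0) (hg₂ : g₂ ^ 2 + g₂ = b₈)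
    (q₁ q₂ q₃ : MvPolynomial (Fin 5) k)
    (hq₁ : q₁ = X 0 ^ 2 + X 1 * X 2)
    (hq₂ : q₂ = X 0 * X 1 + X 2 * X 3 + X 3 ^ 2)
    (hq₃ : q₃ = C b₂ * X 0 * X 2 + C b₃ * X 0 * X 3 + C (b₃ ^ 2) * X 1 * X 3
        + C b₈ * X 2 * X 3 + X 2 * X 4 + X 4 ^ 2)
    (η : MvPolynomial (Fin 5) k →ₐ[k] MvPolynomial (Fin 5) k)
    (hη : η = MvPolynomial.aeval (fun i : Fin 5 =>
        if i = 3 then X 3 + X 2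
        else if i = 4 then X 4 + C b₃ * X 0 + C g₂ * X 2
        else X i)) :
    η q₁ ∈ Ideal.span {q₁, q₂, q₃} ∧ η q₂ ∈ Ideal.span {q₁, q₂, q₃} ∧
      η q₃ ∈ Ideal.span {q₁, q₂, q₃} ∧ η.comp η = AlgHom.id k _ :=
  stmt_4_general k b₂ b₃ b₈ g₂ hg₂ q₁ q₂ q₃ hq₁ hq₂ hq₃ η hη
end

section
/- With notation as above (characteristic 2, q₁ = X² + YZ, q₂ = XY + ZT + T², q₃ = b₂XZ + b₃XT + b₃²YT + b₈ZT + ZU + U², b₃ ≠ 0, g₂² + g₂ = b₈), the two substitutions ι (U ↦ U + Z) and η (T ↦ T + Z, U ↦ U + b₃X + g₂Z) commute, and they generate a group isomorphic to ℤ/2 × ℤ/2 inside the automorphism group of the quotient ring k[X,Y,Z,T,U]/(q₁,q₂,q₃). -/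
/-!
Both substitutions fix `q₁` and `q₂`; `ι` fixes `q₃` and `η` sends it to `q₃ + b₃² q₁` (this is where
`g₂² + g₂ = b₈` enters), so both preserve the ideal and descend to the quotient. In characteristic 2
they are commuting involutions, hence define a homomorphism from the Klein four-group. It is
injective because `ι`, `η` and `ιη` each move `T` or `U` by `Z`, and `Z` does not lie in the ideal:
all three quadrics vanish at the point `(0 : 0 : 1 : 0 : 0)`.
-/

open MvPolynomial

section KleinFour

variable {G : Type*} [Group G] (g h : G) (hg : g ^ 2 = 1) (hh : h ^ 2 = 1) (hgh : Commute g h)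

def kleinFourHom : Multiplicative (ZMod 2 × ZMod 2) →* G where
  toFun a := g ^ a.toAdd.1.val * h ^ a.toAdd.2.val
  map_one' := by simp
  map_mul' a b := by
    simp only [toAdd_mul, Prod.fst_add, Prod.snd_add, ZMod.val_add, ← pow_eq_pow_mod _ hg,
      ← pow_eq_pow_mod _ hh, pow_add, (hgh.symm.pow_pow _ _).mul_mul_mul_comm]

@[simp]
lemma kleinFourHom_ofAdd (a : ZMod 2 × ZMod 2) :
    kleinFourHom g h hg hh hgh (.ofAdd a) = g ^ a.1.val * h ^ a.2.val :=
  rfl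

lemma kleinFourHom_ofAdd_one_zero : kleinFourHom g h hg hh hgh (.ofAdd (1, 0)) = g :=
  (congrArg₂ _ (pow_one g) (pow_zero h)).trans (mul_one g)

lemma kleinFourHom_ofAdd_zero_one : kleinFourHom g h hg hh hgh (.ofAdd (0, 1)) = h :=
  (congrArg₂ _ (pow_zero g) (pow_one h)).trans (one_mul h)

lemma kleinFourHom_injective (hg₁ : g ≠ 1) (hh₁ : h ≠ 1) (hgh₁ : g * h ≠ 1) :
    Function.Injective (kleinFourHom g h hg hh hgh) := by
  refine (injective_iff_map_eq_one _).2 fun a ha => ?_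
  obtain ⟨⟨x, y⟩, rfl⟩ := Multiplicative.ofAdd.surjective a
  fin_cases x <;> fin_cases y
  · rfl
  all_goals simp_all [ZMod.val]

end KleinFour

namespace Ideal

variable {R A : Type*} [CommSemiring R] [CommRing A] [Algebra R A] {I : Ideal A}

def quotientInvolution (f : A →ₐ[R] A) (hf : f.comp f = AlgHom.id R A) (hI : I ≤ I.comap f) :
    (A ⧸ I) ≃ₐ[R] (A ⧸ I) :=
  have hf' : (quotientMapₐ I f hI).comp (quotientMapₐ I f hI) = AlgHom.id R (A ⧸ I) :=
    Quotient.algHom_ext R <| AlgHom.ext fun p => by simp [← AlgHom.comp_apply f f, hf]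
  AlgEquiv.ofAlgHom _ _ hf' hf'

variable {f g : A →ₐ[R] A} {hf : f.comp f = AlgHom.id R A} {hg : g.comp g = AlgHom.id R A}
  {hfI : I ≤ I.comap f} {hgI : I ≤ I.comap g}

@[simp]
lemma quotientInvolution_mk (p : A) :
    quotientInvolution f hf hfI (Quotient.mk I p) = Quotient.mk I (f p) :=
  rfl

lemma quotientInvolution_sq : quotientInvolution f hf hfI ^ 2 = 1 := by
  ext x
  obtain ⟨p, rfl⟩ := Quotient.mk_surjective x
  simp [sq, ← AlgHom.comp_apply f f, hf]

lemma commute_quotientInvolution (hfg : f.comp g = g.comp f) :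
    Commute (quotientInvolution f hf hfI) (quotientInvolution g hg hgI) := by
  ext x
  obtain ⟨p, rfl⟩ := Quotient.mk_surjective x
  simp only [AlgEquiv.mul_apply, quotientInvolution_mk]
  exact congrArg _ (AlgHom.congr_fun hfg p)

end Ideal

lemma AlgEquiv.ne_one_of_apply_mk {R A : Type*} [CommSemiring R] [CommRing A] [Algebra R A]
    {I : Ideal A} {e : (A ⧸ I) ≃ₐ[R] (A ⧸ I)} {p r : A}
    (he : e (Ideal.Quotient.mk I p) = Ideal.Quotient.mk I (p + r)) (hr : r ∉ I) : e ≠ 1 := by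
  rintro rfl
  exact hr (by simpa using Ideal.Quotient.eq.1 he)

noncomputable section

namespace QuadricIntersection

variable {k : Type*} [CommRing k] (b₂ b₃ b₈ g₂ : k)

-- The variables `X, Y, Z, T, U` of the paper are `X 0, …, X 4`.

def q₁ : MvPolynomial (Fin 5) k := X 0 ^ 2 + X 1 * X 2

def q₂ : MvPolynomial (Fin 5) k := X 0 * X 1 + X 2 * X 3 + X 3 ^ 2

def q₃ : MvPolynomial (Fin 5) k :=
  C b₂ * X 0 * X 2 + C b₃ * X 0 * X 3 + C (b₃ ^ 2) * X 1 * X 3 + C b₈ * X 2 * X 3 + X 2 * X 4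
    + X 4 ^ 2

def ideal : Ideal (MvPolynomial (Fin 5) k) := Ideal.span {q₁, q₂, q₃ b₂ b₃ b₈}

def ι : MvPolynomial (Fin 5) k →ₐ[k] MvPolynomial (Fin 5) k :=
  aeval fun i => if i = 4 then X 4 + X 2 else X i

def η : MvPolynomial (Fin 5) k →ₐ[k] MvPolynomial (Fin 5) k :=
  aeval fun i => if i = 3 then X 3 + X 2 else if i = 4 then X 4 + C b₃ * X 0 + C g₂ * X 2 else X i

lemma ι_comp_η : ι.comp (η b₃ g₂) = (η b₃ g₂).comp ι := by
  ext i : 1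
  fin_cases i <;> simp [ι, η]; ring

lemma X_two_notMem_ideal [Nontrivial k] : (X 2 : MvPolynomial (Fin 5) k) ∉ ideal b₂ b₃ b₈ := by
  have hker : ideal b₂ b₃ b₈ ≤ RingHom.ker (eval (![0, 0, 1, 0, 0] : Fin 5 → k)) := by
    refine Ideal.span_le.2 ?_
    simp [Set.insert_subset_iff, q₁, q₂, q₃]
  exact fun h => by simpa using hker h

lemma ι_q₁ : ι (q₁ : MvPolynomial (Fin 5) k) = q₁ := by simp [ι, q₁]

lemma ι_q₂ : ι (q₂ : MvPolynomial (Fin 5) k) = q₂ := by simp [ι, q₂]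

lemma η_q₁ : η b₃ g₂ q₁ = q₁ := by simp [η, q₁]

section CharTwo

variable [CharP k 2]

lemma ι_comp_ι : ι.comp ι = AlgHom.id k (MvPolynomial (Fin 5) k) := by
  ext i : 1
  fin_cases i <;> simp [ι]; grind

lemma η_comp_η : (η b₃ g₂).comp (η b₃ g₂) = AlgHom.id k (MvPolynomial (Fin 5) k) := by
  ext i : 1
  fin_cases i <;> simp [η] <;> grind

lemma ι_q₃ : ι (q₃ b₂ b₃ b₈) = q₃ b₂ b₃ b₈ := by simp [ι, q₃]; grind

lemma η_q₂ : η b₃ g₂ q₂ = q₂ := by simp [η, q₂]; grind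

lemma η_q₃ (hg₂ : g₂ ^ 2 + g₂ = b₈) : η b₃ g₂ (q₃ b₂ b₃ b₈) = q₃ b₂ b₃ b₈ + C (b₃ ^ 2) * q₁ := by
  simp [η, q₃, q₁]
  grind

lemma ideal_le_comap_ι : ideal b₂ b₃ b₈ ≤ (ideal b₂ b₃ b₈).comap ι := by
  refine Ideal.span_le.2 ?_
  simp only [Set.insert_subset_iff, Set.singleton_subset_iff, SetLike.mem_coe, Ideal.mem_comap,
    ι_q₁, ι_q₂, ι_q₃]
  exact ⟨Ideal.subset_span (by simp), Ideal.subset_span (by simp), Ideal.subset_span (by simp)⟩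

lemma ideal_le_comap_η (hg₂ : g₂ ^ 2 + g₂ = b₈) :
    ideal b₂ b₃ b₈ ≤ (ideal b₂ b₃ b₈).comap (η b₃ g₂) := by
  have hq₁ : q₁ ∈ ideal b₂ b₃ b₈ := Ideal.subset_span (by simp)
  refine Ideal.span_le.2 ?_
  simp only [Set.insert_subset_iff, Set.singleton_subset_iff, SetLike.mem_coe, Ideal.mem_comap,
    η_q₁, η_q₂, η_q₃ b₂ b₃ b₈ g₂ hg₂]
  exact ⟨hq₁, Ideal.subset_span (by simp),
    Ideal.add_mem _ (Ideal.subset_span (by simp)) (Ideal.mul_mem_left _ _ hq₁)⟩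

end CharTwo

end QuadricIntersection

end

theorem stmt_5_general (k : Type) [Field k] [CharP k 2]
    (b₂ b₃ b₈ g₂ : k) (hg₂ : g₂ ^ 2 + g₂ = b₈)
    (q₁ q₂ q₃ : MvPolynomial (Fin 5) k)
    (hq₁ : q₁ = X 0 ^ 2 + X 1 * X 2)
    (hq₂ : q₂ = X 0 * X 1 + X 2 * X 3 + X 3 ^ 2)
    (hq₃ : q₃ = C b₂ * X 0 * X 2 + C b₃ * X 0 * X 3 + C (b₃ ^ 2) * X 1 * X 3
        + C b₈ * X 2 * X 3 + X 2 * X 4 + X 4 ^ 2)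
    (ι η : MvPolynomial (Fin 5) k →ₐ[k] MvPolynomial (Fin 5) k)
    (hι : ι = MvPolynomial.aeval (fun i : Fin 5 => if i = 4 then X 4 + X 2 else X i))
    (hη : η = MvPolynomial.aeval (fun i : Fin 5 =>
        if i = 3 then X 3 + X 2
        else if i = 4 then X 4 + C b₃ * X 0 + C g₂ * X 2
        else X i))
    (I : Ideal (MvPolynomial (Fin 5) k)) (hI : I = Ideal.span {q₁, q₂, q₃}) :
    ι.comp η = η.comp ι ∧
    ∃ φ : Multiplicative (ZMod 2 × ZMod 2) →*
        ((MvPolynomial (Fin 5) k ⧸ I) ≃ₐ[k] (MvPolynomial (Fin 5) k ⧸ I)),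
      Function.Injective φ ∧
      (∀ p : MvPolynomial (Fin 5) k,
        φ (Multiplicative.ofAdd ((1, 0) : ZMod 2 × ZMod 2)) (Ideal.Quotient.mk I p)
          = Ideal.Quotient.mk I (ι p)) ∧
      (∀ p : MvPolynomial (Fin 5) k,
        φ (Multiplicative.ofAdd ((0, 1) : ZMod 2 × ZMod 2)) (Ideal.Quotient.mk I p)
          = Ideal.Quotient.mk I (η p)) := open QuadricIntersection in by
  obtain rfl : q₁ = QuadricIntersection.q₁ := hq₁
  obtain rfl : q₂ = QuadricIntersection.q₂ := hq₂
  obtain rfl : q₃ = QuadricIntersection.q₃ b₂ b₃ b₈ := hq₃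
  obtain rfl : I = ideal b₂ b₃ b₈ := hI
  obtain rfl : ι = QuadricIntersection.ι := hι
  obtain rfl : η = QuadricIntersection.η b₃ g₂ := hη
  let ιQ := Ideal.quotientInvolution ι ι_comp_ι (ideal_le_comap_ι b₂ b₃ b₈)
  let ηQ := Ideal.quotientInvolution (η b₃ g₂) (η_comp_η b₃ g₂) (ideal_le_comap_η b₂ b₃ b₈ g₂ hg₂)
  have hZ : X 2 ∉ ideal b₂ b₃ b₈ := X_two_notMem_ideal b₂ b₃ b₈
  refine ⟨ι_comp_η b₃ g₂,
    kleinFourHom ιQ ηQ Ideal.quotientInvolution_sq Ideal.quotientInvolution_sq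
      (Ideal.commute_quotientInvolution (ι_comp_η b₃ g₂)),
    kleinFourHom_injective _ _ _ _ _ ?_ ?_ ?_, fun p => ?_, fun p => ?_⟩
  · exact AlgEquiv.ne_one_of_apply_mk (p := X 4) (by simp [ιQ, ι]) hZ
  · exact AlgEquiv.ne_one_of_apply_mk (p := X 3) (by simp [ηQ, η]) hZ
  · exact AlgEquiv.ne_one_of_apply_mk (p := X 3) (by simp [ιQ, ηQ, ι, η]) hZ
  · rw [kleinFourHom_ofAdd_one_zero, Ideal.quotientInvolution_mk]
  · rw [kleinFourHom_ofAdd_zero_one, Ideal.quotientInvolution_mk]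

/-- With `q₁ = X² + YZ`, `q₂ = XY + ZT + T²`, `q₃ = b₂XZ + b₃XT + b₃²YT + b₈ZT + ZU + U²`
over an algebraically closed field `k` of characteristic 2 (`b₃ ≠ 0`, `g₂² + g₂ = b₈`),
the substitutions `ι : U ↦ U + Z` and `η : T ↦ T + Z, U ↦ U + b₃X + g₂Z` commute, and they
generate a subgroup isomorphic to `ℤ/2 × ℤ/2` of the automorphism group of the quotient
ring `k[X,Y,Z,T,U]/(q₁,q₂,q₃)`: there is an injective group homomorphism from
`ℤ/2 × ℤ/2` to the `k`-algebra automorphisms of the quotient whose two generators act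
as `ι` and `η` respectively. -/
theorem stmt_5 (k : Type) [Field k] [IsAlgClosed k] [CharP k 2]
    (b₂ b₃ b₈ g₂ : k) (hb₃ : b₃ ≠ 0) (hg₂ : g₂ ^ 2 + g₂ = b₈)
    (q₁ q₂ q₃ : MvPolynomial (Fin 5) k)
    (hq₁ : q₁ = X 0 ^ 2 + X 1 * X 2)
    (hq₂ : q₂ = X 0 * X 1 + X 2 * X 3 + X 3 ^ 2)
    (hq₃ : q₃ = C b₂ * X 0 * X 2 + C b₃ * X 0 * X 3 + C (b₃ ^ 2) * X 1 * X 3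
        + C b₈ * X 2 * X 3 + X 2 * X 4 + X 4 ^ 2)
    (ι η : MvPolynomial (Fin 5) k →ₐ[k] MvPolynomial (Fin 5) k)
    (hι : ι = MvPolynomial.aeval (fun i : Fin 5 => if i = 4 then X 4 + X 2 else X i))
    (hη : η = MvPolynomial.aeval (fun i : Fin 5 =>
        if i = 3 then X 3 + X 2
        else if i = 4 then X 4 + C b₃ * X 0 + C g₂ * X 2
        else X i))
    (I : Ideal (MvPolynomial (Fin 5) k)) (hI : I = Ideal.span {q₁, q₂, q₃}) :
    ι.comp η = η.comp ι ∧
    ∃ φ : Multiplicative (ZMod 2 × ZMod 2) →*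
        ((MvPolynomial (Fin 5) k ⧸ I) ≃ₐ[k] (MvPolynomial (Fin 5) k ⧸ I)),
      Function.Injective φ ∧
      (∀ p : MvPolynomial (Fin 5) k,
        φ (Multiplicative.ofAdd ((1, 0) : ZMod 2 × ZMod 2)) (Ideal.Quotient.mk I p)
          = Ideal.Quotient.mk I (ι p)) ∧
      (∀ p : MvPolynomial (Fin 5) k,
        φ (Multiplicative.ofAdd ((0, 1) : ZMod 2 × ZMod 2)) (Ideal.Quotient.mk I p)
          = Ideal.Quotient.mk I (η p)) :=
  stmt_5_general k b₂ b₃ b₈ g₂ hg₂ q₁ q₂ q₃ hq₁ hq₂ hq₃ ι η hι hη I hI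
end

section
/- Let k be a field of characteristic 2 and let H be the 5×5 matrix with rows (b₁₀, 0, b₁₁, 0, 0), (b₉, 0, 0, 0, 0), (0, 0, b₉, 0, 0), (b₁₁, b₁₀, 0, b₉, 0), (b₈, b₆, b₂, b₃, 0) (the Hasse–Witt matrix of the curve with a₃ = b₁₂ = 0). If b₉ = b₁₀ = b₁₂ = 0 then the product H·H^σ·H^{σ²}·H^{σ³}·H^{σ⁴} is the zero matrix; i.e., the corresponding curve has 2-rank 0. -/
/-! With `b₉ = b₁₀ = 0`, an entry `H i j` can be nonzero only when `j` is strictly lower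
than `i` for the heights `(1, 0, 0, 2, 3)` of the basis vectors, and entrywise Frobenius
keeps this shape. Heights add up along a matrix product, so a product of five such
matrices would have to climb at least five levels, which is impossible below height `4`. -/

namespace Matrix

variable {n R : Type*}

def HasHeightGap [Zero R] (h : n → ℕ) (d : ℕ) (M : Matrix n n R) : Prop :=
  ∀ i j, h i < h j + d → M i j = 0

theorem HasHeightGap.mul [Fintype n] [NonUnitalNonAssocSemiring R] {h : n → ℕ} {d e : ℕ}
    {M N : Matrix n n R} (hM : M.HasHeightGap h d) (hN : N.HasHeightGap h e) :
    (M * N).HasHeightGap h (d + e) := by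
  intro i j hij
  rw [mul_apply]
  refine Finset.sum_eq_zero fun l _ => ?_
  by_cases hil : h i < h l + d
  · rw [hM i l hil, zero_mul]
  · rw [hN l j (by omega), mul_zero]

theorem HasHeightGap.map [Zero R] {S : Type*} [Zero S] {h : n → ℕ} {d : ℕ} {M : Matrix n n R}
    (hM : M.HasHeightGap h d) {f : R → S} (hf : f 0 = 0) : (M.map f).HasHeightGap h d :=
  fun i j hij => by rw [map_apply, hM i j hij, hf]

theorem HasHeightGap.eq_zero [Zero R] {h : n → ℕ} {d : ℕ} {M : Matrix n n R}
    (hM : M.HasHeightGap h d) (hd : ∀ i, h i < d) : M = 0 :=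
  ext fun i j => hM i j (by have := hd i; omega)

end Matrix

open Matrix in
theorem stmt_12_general (k : Type) [Field k]
    (b₂ b₃ b₆ b₈ b₉ b₁₀ b₁₁ : k)
    (H : Matrix (Fin 5) (Fin 5) k)
    (hH : H = !![b₁₀, 0, b₁₁, 0, 0;
                 b₉, 0, 0, 0, 0;
                 0, 0, b₉, 0, 0;
                 b₁₁, b₁₀, 0, b₉, 0;
                 b₈, b₆, b₂, b₃, 0])
    (h₉ : b₉ = 0) (h₁₀ : b₁₀ = 0) :
    H * H.map (· ^ 2) * H.map (· ^ 4) * H.map (· ^ 8) * H.map (· ^ 16) = 0 := by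
  subst hH h₉ h₁₀
  set height : Fin 5 → ℕ := ![1, 0, 0, 2, 3]
  have hH : HasHeightGap height 1 !![(0 : k), 0, b₁₁, 0, 0; 0, 0, 0, 0, 0; 0, 0, 0, 0, 0;
      b₁₁, 0, 0, 0, 0; b₈, b₆, b₂, b₃, 0] := by
    intro i j hij
    fin_cases i <;> fin_cases j <;> simp_all [height]
  have hFrob (m : ℕ) (hm : m ≠ 0) := hH.map (f := (· ^ m)) (zero_pow hm)
  refine ((((hH.mul (hFrob 2 (by norm_num))).mul (hFrob 4 (by norm_num))).mul
    (hFrob 8 (by norm_num))).mul (hFrob 16 (by norm_num))).eq_zero ?_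
  intro i
  fin_cases i <;> simp [height]

/-- Let `k` be a field of characteristic 2 and `H` the Hasse–Witt matrix (of the curve
with `a₃ = b₁₂ = 0`) with rows `(b₁₀, 0, b₁₁, 0, 0)`, `(b₉, 0, 0, 0, 0)`,
`(0, 0, b₉, 0, 0)`, `(b₁₁, b₁₀, 0, b₉, 0)`, `(b₈, b₆, b₂, b₃, 0)`.  If
`b₉ = b₁₀ = b₁₂ = 0`, then `H · H^σ · H^{σ²} · H^{σ³} · H^{σ⁴} = 0`, i.e. the
corresponding curve has 2-rank 0. -/
theorem stmt_12 (k : Type) [Field k] [CharP k 2]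
    (b₂ b₃ b₆ b₈ b₉ b₁₀ b₁₁ b₁₂ : k)
    (H : Matrix (Fin 5) (Fin 5) k)
    (hH : H = !![b₁₀, 0, b₁₁, 0, 0;
                 b₉, 0, 0, 0, 0;
                 0, 0, b₉, 0, 0;
                 b₁₁, b₁₀, 0, b₉, 0;
                 b₈, b₆, b₂, b₃, 0])
    (h₉ : b₉ = 0) (h₁₀ : b₁₀ = 0) (h₁₂ : b₁₂ = 0) :
    H * H.map (· ^ 2) * H.map (· ^ 4) * H.map (· ^ 8) * H.map (· ^ 16) = 0 :=
  stmt_12_general k b₂ b₃ b₆ b₈ b₉ b₁₀ b₁₁ H hH h₉ h₁₀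
end

section
/- Let k be an algebraically closed field of characteristic 2. For any b₆ ∈ k, b₆ ≠ 0, the projective variety V(X² + YZ, XY + ZT + T², b₆YT + ZU + U²) ⊂ ℙ⁴ is a smooth curve (its Jacobian criterion is satisfied at every point of the intersection). -/
/-!
In characteristic 2 the Jacobian matrix of the three quadrics has the `3 × 3` minor `Z³` in the
columns `Y, T, U` and the minor `b₆ Y³` in the columns `X, Z, T`. So the rank is 3 unless
`Y = Z = 0`; but then the quadrics reduce to `X² = T² = U² = 0`, and the point is zero.
-/

open MvPolynomial

theorem Matrix.rank_eq_of_det_submatrix_ne_zero {K : Type*} [Field K] {m n : ℕ}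
    (M : Matrix (Fin m) (Fin n) K) (f : Fin m → Fin n) (h : (M.submatrix id f).det ≠ 0) :
    M.rank = m := by
  refine le_antisymm (by simpa using M.rank_le_card_height) ?_
  have hminor : (M.submatrix id f).rank = m := by
    rw [Matrix.rank_of_isUnit _ ((Matrix.isUnit_iff_isUnit_det _).2 h.isUnit), Fintype.card_fin]
  have hfactor : M.submatrix id f = M * (1 : Matrix (Fin n) (Fin n) K).submatrix (Equiv.refl _) f := by
    rw [Matrix.mul_submatrix_one]
    rfl
  calc m = (M.submatrix id f).rank := hminor.symm
    _ ≤ M.rank := hfactor ▸ Matrix.rank_mul_le_left _ _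

section Quadrics

variable {k : Type*} [Field k]

noncomputable def jacobianAt {m n : ℕ} (q : Fin m → MvPolynomial (Fin n) k) (v : Fin n → k) :
    Matrix (Fin m) (Fin n) k :=
  Matrix.of fun i j => eval v (pderiv j (q i))

/-- The coordinates `(X:Y:Z:T:U)` are `X 0, …, X 4`; lemma names refer to them by letter. -/
noncomputable def quadrics (b : k) : Fin 3 → MvPolynomial (Fin 5) k :=
  ![X 0 ^ 2 + X 1 * X 2, X 0 * X 1 + X 2 * X 3 + X 3 ^ 2, C b * X 1 * X 3 + X 2 * X 4 + X 4 ^ 2]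

theorem eq_zero_of_eval_quadrics_eq_zero {b : k} {v : Fin 5 → k}
    (hv : ∀ i, eval v (quadrics b i) = 0) (hY : v 1 = 0) (hZ : v 2 = 0) : v = 0 := by
  have hX : v 0 = 0 := pow_eq_zero_iff two_ne_zero |>.mp <| by simpa [quadrics, hZ] using hv 0
  have hT : v 3 = 0 := pow_eq_zero_iff two_ne_zero |>.mp <| by simpa [quadrics, hX, hZ] using hv 1
  have hU : v 4 = 0 := pow_eq_zero_iff two_ne_zero |>.mp <| by simpa [quadrics, hY, hZ] using hv 2
  ext i
  fin_cases i <;> assumption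

variable [CharP k 2] (b : k) (v : Fin 5 → k)

theorem jacobianAt_quadrics : jacobianAt (quadrics b) v =
    !![0, v 2, v 1, 0, 0; v 1, v 0, v 3, v 2, 0; 0, b * v 3, v 4, b * v 1, v 2] := by
  have two : (2 : k) = 0 := CharTwo.two_eq_zero
  ext i j
  fin_cases i <;> fin_cases j <;> simp [jacobianAt, quadrics, pderiv_X, two, mul_comm]

theorem det_jacobianAt_quadrics_YTU :
    ((jacobianAt (quadrics b) v).submatrix id ![1, 3, 4]).det = v 2 ^ 3 := by
  rw [jacobianAt_quadrics, Matrix.det_fin_three]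
  simp only [Matrix.submatrix_apply, id_eq, Matrix.of_apply, Matrix.cons_val', Matrix.cons_val,
    Matrix.cons_val_zero, Matrix.cons_val_one, Matrix.cons_val_fin_one]
  ring

theorem det_jacobianAt_quadrics_XZT :
    ((jacobianAt (quadrics b) v).submatrix id ![0, 2, 3]).det = b * v 1 ^ 3 := by
  rw [jacobianAt_quadrics, Matrix.det_fin_three]
  simp only [Matrix.submatrix_apply, id_eq, Matrix.of_apply, Matrix.cons_val', Matrix.cons_val,
    Matrix.cons_val_zero, Matrix.cons_val_one, Matrix.cons_val_fin_one]
  linear_combination (-(b * v 1 ^ 3)) * CharTwo.two_eq_zero (R := k)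

end Quadrics

theorem stmt_15_general (k : Type) [Field k] [CharP k 2] (b₆ : k) (hb₆ : b₆ ≠ 0)
    (q : Fin 3 → MvPolynomial (Fin 5) k)
    (hq0 : q 0 = X 0 ^ 2 + X 1 * X 2)
    (hq1 : q 1 = X 0 * X 1 + X 2 * X 3 + X 3 ^ 2)
    (hq2 : q 2 = C b₆ * X 1 * X 3 + X 2 * X 4 + X 4 ^ 2) :
    ∀ v : Fin 5 → k, v ≠ 0 →
      (∀ i : Fin 3, MvPolynomial.eval v (q i) = 0) →
      (Matrix.of fun (i : Fin 3) (j : Fin 5) =>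
        MvPolynomial.eval v (MvPolynomial.pderiv j (q i))).rank = 3 := by
  intro v hv hvq
  obtain rfl : q = quadrics b₆ := by
    ext1 i
    fin_cases i <;> assumption
  change (jacobianAt (quadrics b₆) v).rank = 3
  by_cases hZ : v 2 = 0
  · have hY : v 1 ≠ 0 := fun hY => hv (eq_zero_of_eval_quadrics_eq_zero hvq hY hZ)
    refine Matrix.rank_eq_of_det_submatrix_ne_zero _ ![0, 2, 3] ?_
    rw [det_jacobianAt_quadrics_XZT]
    exact mul_ne_zero hb₆ (pow_ne_zero 3 hY)
  · refine Matrix.rank_eq_of_det_submatrix_ne_zero _ ![1, 3, 4] ?_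
    rw [det_jacobianAt_quadrics_YTU]
    exact pow_ne_zero 3 hZ

/-- Let `k` be an algebraically closed field of characteristic 2 and `b₆ ∈ k`, `b₆ ≠ 0`.
The projective variety `V(X² + YZ, XY + ZT + T², b₆YT + ZU + U²) ⊂ ℙ⁴` is a smooth
curve: at every nonzero point of the affine cone lying on all three quadrics, the
`3 × 5` Jacobian matrix of partial derivatives has rank 3. -/
theorem stmt_15 (k : Type) [Field k] [IsAlgClosed k] [CharP k 2] (b₆ : k) (hb₆ : b₆ ≠ 0)
    (q : Fin 3 → MvPolynomial (Fin 5) k)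
    (hq0 : q 0 = X 0 ^ 2 + X 1 * X 2)
    (hq1 : q 1 = X 0 * X 1 + X 2 * X 3 + X 3 ^ 2)
    (hq2 : q 2 = C b₆ * X 1 * X 3 + X 2 * X 4 + X 4 ^ 2) :
    ∀ v : Fin 5 → k, v ≠ 0 →
      (∀ i : Fin 3, MvPolynomial.eval v (q i) = 0) →
      (Matrix.of fun (i : Fin 3) (j : Fin 5) =>
        MvPolynomial.eval v (MvPolynomial.pderiv j (q i))).rank = 3 :=
  stmt_15_general k b₆ hb₆ q hq0 hq1 hq2
end
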